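/- arXiv:2212.02496 — 2 statements merged into one kernel-verified Lean document; each statement's English description precedes it below -/
import Mathlib

section
/- If a1,...,an ∈ ℕ and an > 12·lcm(a1,...,a_{n-1}), then P(a1,...,an) > (1/3)·P(a1,...,a_{n-1}). -/
/-!
Let `L = lcm(a₁, …, aₙ₋₁)` and `δ = π / (2L)`. Every zero of `cos (aᵢ x)`, `i < n`, lies in `δℤ`,
so on each of the `4L` open cells `(kδ, kδ + δ)` of `[0, 2π]` the signs of these cosines are
constant. The set measured by `P(a₁, …, aₙ₋₁)` is therefore covered, up to a null set, by the `G`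
cells on which all these signs agree, and has measure at most `Gδ`. A set of period `2π / aₙ`
filling half of each period meets any interval of length `ℓ` in measure at least `ℓ/2 - π/aₙ`;
so on each of the `G` cells `cos (aₙ x)` has the common sign on a set of measure at least
`δ/2 - π/aₙ`, and that exceeds `δ/3` exactly when `aₙ > 12L`. The first cell is one of the `G`.
-/

open MeasureTheory Real Set

/-- The cosine sign correlation: the normalized measure of the set of `x ∈ [0, 2π]`
where all `cos (aᵢ x)` are positive or all are negative. -/
noncomputable def cosP (n : ℕ) (a : Fin n → ℕ) : ℝ :=
  (volume {x : ℝ | x ∈ Icc 0 (2 * π) ∧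
    ((∀ i, 0 < Real.cos (a i * x)) ∨ (∀ i, Real.cos (a i * x) < 0))}).toReal / (2 * π)

section Periodic

variable {A : Set ℝ} {T : ℝ}

theorem volume_inter_Ioc_add_eq (hA : MeasurableSet A) (hper : Function.Periodic (· ∈ A) T)
    (hT : 0 < T) (s t : ℝ) :
    volume (A ∩ Ioc s (s + T)) = volume (A ∩ Ioc t (t + T)) := by
  refine (isAddFundamentalDomain_Ioc hT s).measure_set_eq (isAddFundamentalDomain_Ioc hT t) hA ?_
  rintro ⟨g, n, rfl⟩
  ext x
  simpa [add_comm _ x] using eq_iff_iff.mp (hper.zsmul n x)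

theorem volume_inter_Ioc_add_nat_mul (hA : MeasurableSet A) (hper : Function.Periodic (· ∈ A) T)
    (hT : 0 < T) (s : ℝ) (k : ℕ) :
    volume (A ∩ Ioc s (s + k * T)) = k * volume (A ∩ Ioc s (s + T)) := by
  induction k with
  | zero => simp
  | succ k ih =>
    have hsplit : Ioc s (s + (k + 1 : ℕ) * T) =
        Ioc s (s + k * T) ∪ Ioc (s + k * T) (s + k * T + T) := by
      rw [Ioc_union_Ioc_eq_Ioc (by nlinarith [k.cast_nonneg (α := ℝ)]) (by linarith)]
      push_cast; ring_nf
    rw [hsplit, inter_union_distrib_left, measure_union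
      (disjoint_of_subset inter_subset_right inter_subset_right (Ioc_disjoint_Ioc_of_le le_rfl))
      (hA.inter measurableSet_Ioc), ih, volume_inter_Ioc_add_eq hA hper hT (s + k * T) s]
    push_cast; ring

theorem ofReal_mul_volume_inter_Ioc_le (hA : MeasurableSet A)
    (hper : Function.Periodic (· ∈ A) T) (hT : 0 < T) (t s ℓ : ℝ) :
    ENNReal.ofReal (ℓ / T - 1) * volume (A ∩ Ioc t (t + T)) ≤
      volume (A ∩ Ioc s (s + ℓ)) := by
  rcases lt_or_ge ℓ 0 with hℓ | hℓ
  · rw [ENNReal.ofReal_of_nonpos (by linarith [div_neg_of_neg_of_pos hℓ hT]), zero_mul]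
    exact bot_le
  set k := ⌊ℓ / T⌋₊
  have hk : ℓ / T - 1 ≤ k := by linarith [Nat.lt_floor_add_one (ℓ / T)]
  have hkT : k * T ≤ ℓ := (le_div_iff₀ hT).mp (Nat.floor_le (div_nonneg hℓ hT.le))
  calc ENNReal.ofReal (ℓ / T - 1) * volume (A ∩ Ioc t (t + T))
      ≤ k * volume (A ∩ Ioc s (s + T)) := by
        rw [volume_inter_Ioc_add_eq hA hper hT t s, ← ENNReal.ofReal_natCast]
        gcongr
    _ = volume (A ∩ Ioc s (s + k * T)) := (volume_inter_Ioc_add_nat_mul hA hper hT s k).symm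
    _ ≤ volume (A ∩ Ioc s (s + ℓ)) := by gcongr

end Periodic

theorem setOf_cos_pos_inter_Ioc_eq_Ioo {N : ℝ} (hN : 0 < N) (φ : ℝ) :
    {x | 0 < cos (N * x + φ)} ∩ Ioc ((-(π / 2) - φ) / N) ((-(π / 2) - φ) / N + 2 * π / N) =
      Ioo ((-(π / 2) - φ) / N) ((π / 2 - φ) / N) := by
  ext x
  simp only [mem_inter_iff, mem_ofPred_eq, mem_Ioc, mem_Ioo, ← add_div, div_lt_iff₀ hN,
    le_div_iff₀ hN, lt_div_iff₀ hN]
  constructor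
  · rintro ⟨hcos, hlo, hhi⟩
    refine ⟨hlo, not_le.mp fun hge => hcos.not_ge ?_⟩
    exact cos_nonpos_of_pi_div_two_le_of_le (by linarith) (by linarith)
  · rintro ⟨hlo, hhi⟩
    exact ⟨cos_pos_of_mem_Ioo ⟨by linarith, by linarith⟩, hlo, by linarith [pi_pos]⟩

theorem ofReal_sub_le_volume_setOf_cos_pos_inter_Ioo {N : ℝ} (hN : 0 < N) (φ s ℓ : ℝ) :
    ENNReal.ofReal (ℓ / 2 - π / N) ≤
      volume ({x | 0 < cos (N * x + φ)} ∩ Ioo s (s + ℓ)) := by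
  have hmeas : MeasurableSet {x | 0 < cos (N * x + φ)} :=
    measurableSet_lt measurable_const (by fun_prop)
  have hper : Function.Periodic (· ∈ {x | 0 < cos (N * x + φ)}) (2 * π / N) := fun x => by
    simp only [mem_ofPred_eq]
    rw [show N * (x + 2 * π / N) + φ = N * x + φ + 2 * π by field_simp; ring, cos_add_two_pi]
  set t := (-(π / 2) - φ) / N
  have hperiod : volume ({x | 0 < cos (N * x + φ)} ∩ Ioc t (t + 2 * π / N)) =
      ENNReal.ofReal (π / N) := by
    rw [setOf_cos_pos_inter_Ioc_eq_Ioo hN φ, volume_Ioo]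
    congr 1
    field_simp
    ring
  calc ENNReal.ofReal (ℓ / 2 - π / N)
      = ENNReal.ofReal (ℓ / (2 * π / N) - 1) * ENNReal.ofReal (π / N) := by
        rw [← ENNReal.ofReal_mul' (by positivity)]
        congr 1
        field_simp
    _ ≤ volume ({x | 0 < cos (N * x + φ)} ∩ Ioc s (s + ℓ)) := by
        rw [← hperiod]
        exact ofReal_mul_volume_inter_Ioc_le hmeas hper (by positivity) t s ℓ
    _ = volume ({x | 0 < cos (N * x + φ)} ∩ Ioo s (s + ℓ)) :=
        measure_congr ((Filter.EventuallyEq.refl _ _).inter Ioo_ae_eq_Ioc).symm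

def cell (δ : ℝ) (k : ℕ) : Set ℝ := Ioo (k * δ) (k * δ + δ)

theorem pairwise_disjoint_cell (δ : ℝ) : Pairwise (Function.onFun Disjoint (cell δ)) :=
  (pairwise_disjoint_on _).mpr fun k l hkl => disjoint_left.mpr fun x hk hl => by
    have : (k + 1 : ℝ) ≤ l := by exact_mod_cast hkl
    nlinarith [hk.1, hk.2, hl.1, hl.2]

theorem volume_Icc_inter_le_ofReal_card_mul {δ : ℝ} (hδ : 0 < δ) (S : Set ℝ) (m : ℕ)
    (s : Finset ℕ)
    (hs : ∀ k < m, (cell δ k ∩ S).Nonempty → k ∈ s) :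
    volume (Icc 0 (m * δ) ∩ S) ≤ ENNReal.ofReal (s.card * δ) := by
  have hcover : Icc 0 (m * δ) ∩ S ⊆ range (fun k : ℕ => k * δ) ∪ ⋃ k ∈ s, cell δ k := by
    rintro x ⟨⟨hx0, hxm⟩, hxS⟩
    by_cases hgrid : x ∈ range (fun k : ℕ => k * δ)
    · exact Or.inl hgrid
    set k := ⌊x / δ⌋₊
    have hkx : k * δ < x :=
      ((le_div_iff₀ hδ).mp (Nat.floor_le (div_nonneg hx0 hδ.le))).lt_of_ne fun h => hgrid ⟨k, h⟩
    have hxk : x < k * δ + δ := by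
      linarith [(div_lt_iff₀ hδ).mp (Nat.lt_floor_add_one (x / δ))]
    have hkm : k < m := by exact_mod_cast (mul_lt_mul_iff_left₀ hδ).mp (hkx.trans_le hxm)
    exact Or.inr (mem_biUnion (hs k hkm ⟨x, ⟨hkx, hxk⟩, hxS⟩) ⟨hkx, hxk⟩)
  calc volume (Icc 0 (m * δ) ∩ S)
      ≤ volume (range (fun k : ℕ => k * δ)) + volume (⋃ k ∈ s, cell δ k) :=
        (measure_mono hcover).trans (measure_union_le _ _)
    _ ≤ ∑ k ∈ s, volume (cell δ k) := by
        rw [(countable_range _).measure_zero, zero_add]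
        exact measure_biUnion_finset_le _ _
    _ = ENNReal.ofReal (s.card * δ) := by
        simp [cell, volume_Ioo, ENNReal.ofReal_mul (Nat.cast_nonneg _)]

theorem card_mul_le_volume_of_le_inter_cell {T : Set ℝ} (hT : MeasurableSet T) (δ : ℝ)
    (s : Finset ℕ) {c : ENNReal} (hc : ∀ k ∈ s, c ≤ volume (T ∩ cell δ k)) :
    s.card * c ≤ volume T :=
  calc s.card * c ≤ ∑ k ∈ s, volume (T ∩ cell δ k) := by
        simpa using Finset.sum_le_sum hc
    _ = volume (⋃ k ∈ s, T ∩ cell δ k) := by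
        refine (measure_biUnion_finset (fun k _ l _ hkl => ?_)
          fun k _ => hT.inter measurableSet_Ioo).symm
        exact (pairwise_disjoint_cell δ hkl).mono inter_subset_right inter_subset_right
    _ ≤ volume T := measure_mono (iUnion₂_subset fun _ _ => inter_subset_left)

theorem exists_int_eq_mul_of_cos_mul_eq_zero {b L : ℕ} (hb : b ∣ L) (hL : 0 < L) {x : ℝ}
    (hx : cos (b * x) = 0) : ∃ m : ℤ, x = m * (π / (2 * L)) := by
  obtain ⟨j, hj⟩ := cos_eq_zero_iff.mp hx
  obtain ⟨e, rfl⟩ := hb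
  have hb0 : (b : ℝ) ≠ 0 := by rintro h; simp [h] at hx
  refine ⟨(2 * j + 1) * e, ?_⟩
  have he : (e : ℝ) ≠ 0 := by exact_mod_cast (Nat.pos_of_mul_pos_left hL).ne'
  calc x = b * x / b := by field_simp
    _ = _ := by rw [hj]; push_cast; field_simp

theorem cos_mul_ne_zero_of_mem_cell {b L : ℕ} (hb : b ∣ L) (hL : 0 < L) {k : ℕ} {x : ℝ}
    (hx : x ∈ cell (π / (2 * L)) k) : cos (b * x) ≠ 0 := by
  intro h0
  obtain ⟨m, rfl⟩ := exists_int_eq_mul_of_cos_mul_eq_zero hb hL h0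
  have hδ : 0 < π / (2 * L) := by positivity
  have h1 : (k : ℝ) < m := (mul_lt_mul_iff_left₀ hδ).mp hx.1
  have h2 : (m : ℝ) < k + 1 := (mul_lt_mul_iff_left₀ hδ).mp (by linarith [hx.2])
  have : (k : ℤ) < m := by exact_mod_cast h1
  have : m < (k : ℤ) + 1 := by exact_mod_cast h2
  omega

theorem IsPreconnected.pos_of_pos {X : Type*} [TopologicalSpace X] {s : Set X} {f : X → ℝ}
    (hs : IsPreconnected s) (hf : ContinuousOn f s) (h0 : ∀ x ∈ s, f x ≠ 0) {x y : X}
    (hx : x ∈ s) (hy : y ∈ s) (hfx : 0 < f x) : 0 < f y := by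
  by_contra! hfy
  obtain ⟨z, hz, hfz⟩ := hs.intermediate_value hy hx hf ⟨hfy, hfx.le⟩
  exact h0 z hz hfz

theorem cos_mul_pos_of_mem_cell {b L k : ℕ} (hb : b ∣ L) (hL : 0 < L) {x y : ℝ}
    (hx : x ∈ cell (π / (2 * L)) k) (hy : y ∈ cell (π / (2 * L)) k)
    (h : 0 < cos (b * x)) : 0 < cos (b * y) :=
  isPreconnected_Ioo.pos_of_pos (f := fun t => cos (b * t)) (by fun_prop)
    (fun _ ht => cos_mul_ne_zero_of_mem_cell hb hL ht) hx hy h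

theorem cos_mul_neg_of_mem_cell {b L k : ℕ} (hb : b ∣ L) (hL : 0 < L) {x y : ℝ}
    (hx : x ∈ cell (π / (2 * L)) k) (hy : y ∈ cell (π / (2 * L)) k)
    (h : cos (b * x) < 0) : cos (b * y) < 0 :=
  neg_pos.mp <| isPreconnected_Ioo.pos_of_pos (f := fun t => -cos (b * t)) (by fun_prop)
    (fun _ ht => neg_ne_zero.mpr (cos_mul_ne_zero_of_mem_cell hb hL ht)) hx hy (neg_pos.mpr h)

def cosSignSet {ι : Type*} (a : ι → ℕ) : Set ℝ :=
  {x | (∀ i, 0 < cos (a i * x)) ∨ ∀ i, cos (a i * x) < 0}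

theorem cosP_eq (n : ℕ) (a : Fin n → ℕ) :
    cosP n a = (volume (Icc 0 (2 * π) ∩ cosSignSet a)).toReal / (2 * π) :=
  rfl

theorem measurableSet_cosSignSet {ι : Type*} [Countable ι] (a : ι → ℕ) :
    MeasurableSet (cosSignSet a) := by
  simp only [cosSignSet, ofPred_or, ofPred_forall]
  exact (MeasurableSet.iInter fun i => measurableSet_lt measurable_const (by fun_prop)).union
    (MeasurableSet.iInter fun i => measurableSet_lt (by fun_prop) measurable_const)

theorem cell_zero_inter_cosSignSet_nonempty {ι : Type*} {b : ι → ℕ} {L : ℕ}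
    (hdvd : ∀ i, b i ∣ L) (hL : 0 < L) : (cell (π / (2 * L)) 0 ∩ cosSignSet b).Nonempty := by
  have hπ := pi_pos
  have hb : ∀ i, (b i : ℝ) * (π / (4 * L)) ≤ π / 4 := fun i => by
    have : (b i : ℝ) ≤ L := by exact_mod_cast Nat.le_of_dvd hL (hdvd i)
    calc (b i : ℝ) * (π / (4 * L)) ≤ L * (π / (4 * L)) := by gcongr
      _ = π / 4 := by field_simp
  refine ⟨π / (4 * L), ⟨?_, ?_⟩,
    Or.inl fun i => cos_pos_of_mem_Ioo ⟨?_, by linarith [hb i]⟩⟩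
  · simp only [Nat.cast_zero, zero_mul]
    positivity
  · rw [Nat.cast_zero, zero_mul, zero_add,
      div_lt_div_iff_of_pos_left hπ (by positivity) (by positivity)]
    have : (0 : ℝ) < L := by exact_mod_cast hL
    linarith
  · have : 0 ≤ (b i : ℝ) * (π / (4 * L)) := by positivity
    linarith

/-- `φ` is `0` or `π` according to the common sign on the cell: `0 < cos (y + π) ↔ cos y < 0`. -/
theorem exists_phase_subset_cosSignSet {n L k : ℕ} {a : Fin (n + 1) → ℕ}
    (hdvd : ∀ i : Fin n, a i.castSucc ∣ L) (hL : 0 < L)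
    (hk : (cell (π / (2 * L)) k ∩ cosSignSet (a ∘ Fin.castSucc)).Nonempty) :
    ∃ φ : ℝ, cell (π / (2 * L)) k ∩ {x | 0 < cos (a (Fin.last n) * x + φ)} ⊆
      cosSignSet a := by
  obtain ⟨x₀, hx₀, hpos | hneg⟩ := hk
  · refine ⟨0, fun x ⟨hx, hlast⟩ => Or.inl (Fin.forall_fin_succ'.mpr ⟨fun i => ?_, ?_⟩)⟩
    · exact cos_mul_pos_of_mem_cell (hdvd i) hL hx₀ hx (hpos i)
    · simpa using hlast
  · refine ⟨π, fun x ⟨hx, hlast⟩ => Or.inr (Fin.forall_fin_succ'.mpr ⟨fun i => ?_, ?_⟩)⟩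
    · exact cos_mul_neg_of_mem_cell (hdvd i) hL hx₀ hx (hneg i)
    · simpa [cos_add_pi] using hlast

theorem ofReal_card_mul_le_volume_Icc_inter_cosSignSet {n L : ℕ} {a : Fin (n + 1) → ℕ}
    (hdvd : ∀ i : Fin n, a i.castSucc ∣ L) (hL : 0 < L) (hN : 0 < a (Fin.last n))
    (s : Finset ℕ) (hs : ∀ k ∈ s, k < 4 * L ∧
      (cell (π / (2 * L)) k ∩ cosSignSet (a ∘ Fin.castSucc)).Nonempty) :
    ENNReal.ofReal (s.card * (π / (2 * L) / 2 - π / a (Fin.last n))) ≤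
      volume (Icc 0 (2 * π) ∩ cosSignSet a) := by
  set δ := π / (2 * L) with hδ
  rw [ENNReal.ofReal_mul (Nat.cast_nonneg _), ENNReal.ofReal_natCast]
  refine card_mul_le_volume_of_le_inter_cell
    (measurableSet_Icc.inter (measurableSet_cosSignSet a)) δ s fun k hk => ?_
  obtain ⟨hk4, hne⟩ := hs k hk
  obtain ⟨φ, hφ⟩ := exists_phase_subset_cosSignSet hdvd hL hne
  refine (ofReal_sub_le_volume_setOf_cos_pos_inter_Ioo (by exact_mod_cast hN) φ (k * δ)
    δ).trans (measure_mono ?_)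
  rintro x ⟨hcos, hx⟩
  have hk : (k + 1 : ℝ) * δ ≤ 2 * π := by
    have : (k + 1 : ℝ) ≤ 4 * L := by exact_mod_cast hk4
    calc (k + 1 : ℝ) * δ ≤ 4 * L * δ := by gcongr
      _ = 2 * π := by rw [hδ]; field_simp; ring
  have : 0 ≤ (k : ℝ) * δ := by positivity
  exact ⟨⟨⟨by linarith [hx.1], by linarith [hx.2]⟩, hφ ⟨hx, hcos⟩⟩, hx⟩

theorem stmt_9 (n : ℕ) (a : Fin (n + 1) → ℕ) (hpos : ∀ i, 0 < a i)
    (h : a (Fin.last n) > 12 * Finset.univ.lcm (a ∘ Fin.castSucc)) :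
    cosP (n + 1) a > (1 / 3) * cosP n (a ∘ Fin.castSucc) := by
  classical
  set L := Finset.univ.lcm (a ∘ Fin.castSucc)
  set N := a (Fin.last n)
  set δ := π / (2 * L) with hδ
  have hL : 0 < L := Nat.pos_of_ne_zero <| Finset.lcm_ne_zero_iff.mpr fun i _ => (hpos _).ne'
  have hdvd : ∀ i, (a ∘ Fin.castSucc) i ∣ L := fun i => Finset.dvd_lcm (Finset.mem_univ i)
  have hN : π / N < δ / 6 := by
    rw [hδ, div_div,
      div_lt_div_iff_of_pos_left pi_pos (Nat.cast_pos.mpr (by omega)) (by positivity)]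
    exact_mod_cast (by omega : 2 * L * 6 < N)
  let good := (Finset.range (4 * L)).filter
    fun k => (cell δ k ∩ cosSignSet (a ∘ Fin.castSucc)).Nonempty
  have hgood : (1 : ℝ) ≤ good.card := Nat.one_le_cast.mpr <| Finset.card_pos.mpr
    ⟨0, Finset.mem_filter.mpr ⟨by simpa using hL, cell_zero_inter_cosSignSet_nonempty hdvd hL⟩⟩
  have hold :
      (volume (Icc 0 (2 * π) ∩ cosSignSet (a ∘ Fin.castSucc))).toReal ≤ good.card * δ := by
    refine ENNReal.toReal_le_of_le_ofReal (by positivity) ?_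
    rw [show 2 * π = (4 * L : ℕ) * δ by rw [hδ]; push_cast; field_simp; ring]
    exact volume_Icc_inter_le_ofReal_card_mul (by positivity) _ _ good
      fun k hk hne => Finset.mem_filter.mpr ⟨Finset.mem_range.mpr hk, hne⟩
  have hnew : good.card * (δ / 2 - π / N) ≤ (volume (Icc 0 (2 * π) ∩ cosSignSet a)).toReal :=
    (ENNReal.ofReal_le_iff_le_toReal ((measure_mono inter_subset_left).trans_lt
      measure_Icc_lt_top).ne).mp <| ofReal_card_mul_le_volume_Icc_inter_cosSignSet hdvd hL
        (by omega) good fun k hk => (Finset.mem_filter.mp hk).imp_left Finset.mem_range.mp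
  rw [gt_iff_lt, cosP_eq, cosP_eq, ← mul_div_assoc, div_lt_div_iff_of_pos_right two_pi_pos]
  nlinarith
end

section
/- Let a, b be nonzero integers with a/b = p/q in lowest terms where both p and q are odd. Then |∫₀¹ sgn(cos(2π a t)·cos(2π b t)) dt| = 1/|pq|. -/
/-!
Write `a = g p`, `b = g q` and `N = 4 |g p q|`. On each cell `(m / N, (m + 1) / N)` neither cosine
changes sign, so the integral is `1 / N` times the sum over `m < N` of a `4 |p q|`-periodic
`±1`-valued sequence. Splitting `m` by its residue mod 4, the sequence restricted to a residue
class is a product of a `|q|`-periodic and a `|p|`-periodic factor, so by the Chinese remainder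
theorem its sum factors; each factor sums to `±1`, and the whole sum is `±4 |g|`.
-/

open MeasureTheory Real Set

theorem Finset.sum_range_mul_eq_sum_sum {M : Type*} [AddCommMonoid M] (f : ℕ → M) (L K : ℕ) :
    ∑ m ∈ range (L * K), f m = ∑ c ∈ range L, ∑ n ∈ range K, f (L * n + c) := by
  induction K with
  | zero => simp
  | succ K ih =>
    simp only [Nat.mul_succ, sum_range_add, ih, sum_range_succ, sum_add_distrib]

open Finset in
theorem Function.Periodic.sum_range_mul {M : Type*} [AddCommMonoid M] {f : ℕ → M} {K : ℕ}
    (hf : Function.Periodic f K) (G : ℕ) :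
    ∑ m ∈ range (K * G), f m = G • ∑ m ∈ range K, f m := by
  rw [sum_range_mul_eq_sum_sum, ← sum_nsmul]
  refine sum_congr rfl fun c _ => ?_
  calc ∑ n ∈ range G, f (K * n + c) = ∑ _n ∈ range G, f c :=
        sum_congr rfl fun n _ => by rw [add_comm, mul_comm]; exact hf.nat_mul n c
    _ = G • f c := by rw [sum_const, card_range]

theorem IsCoprime.exists_eq_mul_of_mul_eq_mul {R : Type*} [CommRing R] {a b p q : R}
    (hpq : IsCoprime p q) (h : a * q = b * p) : ∃ g, a = g * p ∧ b = g * q := by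
  obtain ⟨u, v, huv⟩ := hpq
  exact ⟨u * a + v * b, by linear_combination v * h - a * huv,
    by linear_combination -u * h - b * huv⟩

open Finset in
theorem Nat.Coprime.sum_range_mul_mul_of_periodic {R : Type*} [CommSemiring R] {P Q : ℕ}
    (hP : 0 < P) (hQ : 0 < Q) (hco : Nat.Coprime P Q) {g h : ℕ → R}
    (hg : Function.Periodic g Q) (hh : Function.Periodic h P) :
    ∑ n ∈ range (P * Q), g n * h n = (∑ n ∈ range Q, g n) * ∑ n ∈ range P, h n := by
  rw [sum_mul_sum, ← sum_product']
  refine sum_nbij' (fun n => (n % Q, n % P)) (fun x => Nat.chineseRemainder hco x.2 x.1)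
    ?_ ?_ ?_ ?_ ?_
  · intro n _
    simp [Nat.mod_lt _ hQ, Nat.mod_lt _ hP]
  · intro x _
    simpa using Nat.chineseRemainder_lt_mul hco x.2 x.1 hP.ne' hQ.ne'
  · intro n hn
    have hn : n < P * Q := by simpa using hn
    have h := Nat.chineseRemainder_modEq_unique hco (Nat.mod_modEq n P).symm
      (Nat.mod_modEq n Q).symm
    rwa [Nat.ModEq, Nat.mod_eq_of_lt hn,
      Nat.mod_eq_of_lt (Nat.chineseRemainder_lt_mul _ _ _ hP.ne' hQ.ne'), eq_comm] at h
  · rintro ⟨i, j⟩ hij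
    have hij : i < Q ∧ j < P := by simpa using hij
    have h1 := (Nat.chineseRemainder hco j i).2.1
    have h2 := (Nat.chineseRemainder hco j i).2.2
    simp only [Prod.mk.injEq]
    exact ⟨by rw [h2, Nat.mod_eq_of_lt hij.1], by rw [h1, Nat.mod_eq_of_lt hij.2]⟩
  · intro n _
    rw [hg.map_mod_nat, hh.map_mod_nat]

/-- The sign of `cos (2π u)` for `u ∈ (m / 4C, (m + 1) / 4C)`. -/
def cosCellSign (C m : ℕ) : ℤ := (-1) ^ ((m + C) / (2 * C))

theorem cosCellSign_periodic (C : ℕ) : Function.Periodic (cosCellSign C) (4 * C) := by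
  intro m
  rcases C.eq_zero_or_pos with rfl | hC
  · simp
  rw [cosCellSign, cosCellSign, show m + 4 * C + C = m + C + 2 * C * 2 by ring,
    Nat.add_mul_div_left _ _ (by omega), pow_add]
  norm_num

open Finset in
theorem sum_cosCellSign_four_mul_add {Q c : ℕ} (hQ : Odd Q) (hc : c < 4) :
    ∑ n ∈ range Q, cosCellSign Q (4 * n + c) = (-1) ^ (Q / 2 + (c + 1) / 2) := by
  obtain ⟨r, hr⟩ := hQ
  have hterm : ∀ n ∈ range Q, cosCellSign Q (4 * n + c) =
      if Q ≤ 4 * n + c ∧ 4 * n + c < 3 * Q then -1 else 1 := by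
    intro n hn
    have hn : n < Q := Finset.mem_range.mp hn
    rw [cosCellSign]
    split_ifs with h
    · rw [Nat.div_eq_of_lt_le (k := 1) (by omega) (by omega)]; norm_num
    · rcases Nat.lt_or_ge (4 * n + c) Q with h' | h'
      · rw [Nat.div_eq_of_lt (by omega)]; norm_num
      · rw [Nat.div_eq_of_lt_le (k := 2) (by omega) (by omega)]; norm_num
  have hfilter : {n ∈ range Q | Q ≤ 4 * n + c ∧ 4 * n + c < 3 * Q} =
      Finset.Ico ((Q - c + 3) / 4) ((3 * Q - c + 3) / 4) := by
    ext n
    simp only [Finset.mem_filter, Finset.mem_range, Finset.mem_Ico]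
    omega
  have hcard := card_filter_add_card_filter_not (s := range Q)
    (fun n => Q ≤ 4 * n + c ∧ 4 * n + c < 3 * Q)
  rw [hfilter, card_range, Nat.card_Ico] at hcard
  rw [sum_congr rfl hterm, sum_ite, sum_const, sum_const, hfilter, Nat.card_Ico]
  rcases Nat.even_or_odd (Q / 2 + (c + 1) / 2) with ⟨s, hs⟩ | ⟨s, hs⟩
  · rw [Even.neg_one_pow ⟨s, hs⟩]
    simp only [smul_neg, nsmul_eq_mul, mul_one]
    omega
  · rw [Odd.neg_one_pow ⟨s, hs⟩]
    simp only [smul_neg, nsmul_eq_mul, mul_one]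
    omega

open Finset in
theorem sum_cosCellSign_mul_cosCellSign {P Q : ℕ} (hP : Odd P) (hQ : Odd Q)
    (hco : Nat.Coprime P Q) :
    ∑ m ∈ range (4 * (P * Q)), cosCellSign Q m * cosCellSign P m =
      4 * (-1) ^ (P / 2 + Q / 2) := by
  have hresidue : ∀ c ∈ range 4,
      ∑ n ∈ range (P * Q), cosCellSign Q (4 * n + c) * cosCellSign P (4 * n + c) =
        (-1) ^ (P / 2 + Q / 2) := by
    intro c hc
    have hc : c < 4 := Finset.mem_range.mp hc
    have hshift : ∀ C, Function.Periodic (fun n => cosCellSign C (4 * n + c)) C := fun C n => by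
      simp only [show 4 * (n + C) + c = 4 * n + c + 4 * C by ring, cosCellSign_periodic C _]
    rw [hco.sum_range_mul_mul_of_periodic hP.pos hQ.pos (hshift Q) (hshift P),
      sum_cosCellSign_four_mul_add hQ hc, sum_cosCellSign_four_mul_add hP hc]
    calc (-1 : ℤ) ^ (Q / 2 + (c + 1) / 2) * (-1) ^ (P / 2 + (c + 1) / 2)
        = (-1) ^ (P / 2 + Q / 2) * (-1) ^ ((c + 1) / 2 + (c + 1) / 2) := by ring
      _ = (-1) ^ (P / 2 + Q / 2) := by rw [Even.neg_one_pow ⟨_, rfl⟩, mul_one]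
  rw [sum_range_mul_eq_sum_sum, sum_congr rfl hresidue, sum_const, card_range, nsmul_eq_mul]
  norm_num

theorem Real.sign_eq_neg_one_pow_of_pos {x : ℝ} {k : ℕ} (h : 0 < (-1) ^ k * x) :
    Real.sign x = (-1) ^ k := by
  rcases neg_one_pow_eq_or ℝ k with hk | hk <;> rw [hk] at h ⊢
  · exact Real.sign_of_pos (by linarith)
  · exact Real.sign_of_neg (by linarith)

theorem neg_one_pow_mul_cos_two_pi_mul_pos {u : ℝ} {k : ℕ} (h₁ : k < 2 * u + 1 / 2)
    (h₂ : 2 * u + 1 / 2 < k + 1) : 0 < (-1) ^ k * cos (2 * π * u) := by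
  have hshift : (-1) ^ k * cos (2 * π * u) = cos (2 * π * u - k * π) := by
    rw [show 2 * π * u = (2 * π * u - k * π) + k * π by ring, cos_add_nat_mul_pi,
      ← mul_assoc, ← pow_add, Even.neg_one_pow ⟨k, rfl⟩, one_mul, add_sub_cancel_right]
  rw [hshift]
  apply cos_pos_of_mem_Ioo
  constructor <;> nlinarith [pi_pos]

theorem cosCellSign_mul_cos_pos {C m : ℕ} {u : ℝ} (hC : 0 < C) (h₁ : m < 4 * C * u)
    (h₂ : 4 * C * u < m + 1) : 0 < (cosCellSign C m : ℝ) * cos (2 * π * u) := by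
  rw [cosCellSign]
  push_cast
  set k := (m + C) / (2 * C)
  have hC' : (0 : ℝ) < 2 * C := by positivity
  have hlow : (k : ℝ) * (2 * C) ≤ m + C := by exact_mod_cast Nat.div_mul_le_self (m + C) (2 * C)
  have hhigh : (m : ℝ) + C + 1 ≤ (k + 1) * (2 * C) := by
    have : m + C < k * (2 * C) + 2 * C := Nat.lt_div_mul_add (by omega)
    exact_mod_cast (by rw [add_one_mul]; omega : m + C + 1 ≤ (k + 1) * (2 * C))
  apply neg_one_pow_mul_cos_two_pi_mul_pos
  · refine lt_of_mul_lt_mul_right ?_ hC'.le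
    linarith
  · refine lt_of_mul_lt_mul_right ?_ hC'.le
    linarith

theorem integral_eq_sum_div_of_eqOn_cells {f : ℝ → ℝ} {w : ℕ → ℝ} {N : ℝ} (hN : 0 < N)
    (K : ℕ)
    (hf : ∀ m < K, EqOn f (fun _ => w m) (Ioo (m / N) ((m + 1) / N))) :
    ∫ t in (0 : ℝ)..K / N, f t = (∑ m ∈ Finset.range K, w m) / N := by
  have hcell : ∀ m < K, IntervalIntegrable f volume (m / N) ((m + 1 : ℕ) / N) ∧
      ∫ t in (m / N : ℝ)..(m + 1 : ℕ) / N, f t = w m / N := by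
    intro m hm
    have hle : (m / N : ℝ) ≤ (m + 1 : ℕ) / N := by gcongr; simp
    have hfm := hf m hm
    push_cast at hle ⊢
    constructor
    · rw [intervalIntegrable_iff_integrableOn_Ioo_of_le hle]
      exact (integrableOn_const measure_Ioo_lt_top.ne).congr_fun hfm.symm measurableSet_Ioo
    · rw [intervalIntegral.integral_of_le hle, integral_Ioc_eq_integral_Ioo,
        setIntegral_congr_fun measurableSet_Ioo hfm, setIntegral_const, volume_real_Ioo_of_le hle,
        smul_eq_mul]
      field_simp
      ring
  have hsum := intervalIntegral.sum_integral_adjacent_intervals (a := fun k : ℕ => (k / N : ℝ))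
    (fun k hk => (hcell k hk).1)
  rw [Nat.cast_zero, zero_div] at hsum
  rw [← hsum, Finset.sum_div]
  exact Finset.sum_congr rfl fun m hm => (hcell m (Finset.mem_range.mp hm)).2

theorem cos_mul_abs_mul (c x t : ℝ) : cos (c * |x| * t) = cos (c * x * t) := by
  rcases abs_choice x with h | h <;> rw [h]
  rw [mul_neg, neg_mul, cos_neg]

theorem integral_sign_cos_mul_cos {G P Q : ℕ} (hG : 0 < G) (hP : Odd P) (hQ : Odd Q)
    (hco : Nat.Coprime P Q) :
    ∫ t in (0 : ℝ)..1, Real.sign (cos (2 * π * (G * P) * t) * cos (2 * π * (G * Q) * t)) =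
      (-1) ^ (P / 2 + Q / 2) / (P * Q) := by
  set K := 4 * (P * Q) * G
  have hK : (0 : ℝ) < K := by have := hP.pos; have := hQ.pos; positivity
  have hcells : ∀ m < K, EqOn
      (fun t => Real.sign (cos (2 * π * (G * P) * t) * cos (2 * π * (G * Q) * t)))
      (fun _ => ((cosCellSign Q m * cosCellSign P m : ℤ) : ℝ)) (Ioo (m / K) ((m + 1) / K)) := by
    intro m _ t ⟨ht₁, ht₂⟩
    rw [div_lt_iff₀ hK] at ht₁
    rw [lt_div_iff₀ hK] at ht₂
    have hQt : (K : ℝ) * t = 4 * Q * (G * P * t) := by simp only [K]; push_cast; ring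
    have hPt : (K : ℝ) * t = 4 * P * (G * Q * t) := by simp only [K]; push_cast; ring
    have hQcell := cosCellSign_mul_cos_pos hQ.pos (m := m) (u := G * P * t)
      (by linarith) (by linarith)
    have hPcell := cosCellSign_mul_cos_pos hP.pos (m := m) (u := G * Q * t)
      (by linarith) (by linarith)
    simp only [cosCellSign, Int.cast_mul, Int.cast_pow, Int.cast_neg, Int.cast_one]
      at hQcell hPcell ⊢
    rw [← pow_add]
    exact Real.sign_eq_neg_one_pow_of_pos ((mul_pos hQcell hPcell).trans_eq (by ring_nf))
  have hperiodic :
      Function.Periodic (fun m => cosCellSign Q m * cosCellSign P m) (4 * (P * Q)) := by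
    have hQper := (cosCellSign_periodic Q).nat_mul P
    have hPper := (cosCellSign_periodic P).nat_mul Q
    rw [Nat.cast_id, show P * (4 * Q) = 4 * (P * Q) by ring] at hQper
    rw [Nat.cast_id, show Q * (4 * P) = 4 * (P * Q) by ring] at hPper
    exact hQper.mul hPper
  have hint := integral_eq_sum_div_of_eqOn_cells hK K hcells
  rw [div_self hK.ne'] at hint
  rw [hint, ← Int.cast_sum, hperiodic.sum_range_mul, sum_cosCellSign_mul_cosCellSign hP hQ hco]
  simp only [K, nsmul_eq_mul]
  push_cast
  field_simp

theorem stmt_13_general (a b p q : ℤ) (ha : a ≠ 0) (hpq : IsCoprime p q)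
    (hratio : a * q = b * p) (hp : Odd p) (hq : Odd q) :
    |∫ t in (0:ℝ)..1,
        Real.sign (Real.cos (2 * π * a * t) * Real.cos (2 * π * b * t))| =
      1 / |(p : ℝ) * q| := by
  obtain ⟨g, rfl, rfl⟩ := hpq.exists_eq_mul_of_mul_eq_mul hratio
  have hg : 0 < g.natAbs := Int.natAbs_pos.mpr (left_ne_zero_of_mul ha)
  have hP := Int.natAbs_odd.mpr hp
  have hQ := Int.natAbs_odd.mpr hq
  have hPQ : (0 : ℝ) < p.natAbs * q.natAbs := by have := hP.pos; have := hQ.pos; positivity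
  have hint := integral_sign_cos_mul_cos hg hP hQ (Int.isCoprime_iff_gcd_eq_one.mp hpq)
  have habs : ∀ n : ℤ, |(n : ℝ)| = n.natAbs := fun n => by rw [Nat.cast_natAbs, Int.cast_abs]
  simp only [← cos_mul_abs_mul _ ((g * p : ℤ) : ℝ),
    ← cos_mul_abs_mul _ ((g * q : ℤ) : ℝ), habs, abs_mul, Int.natAbs_mul, Nat.cast_mul]
  rw [hint, abs_div, abs_pow, abs_neg, abs_one, one_pow, abs_of_pos hPQ]

theorem stmt_13 (a b p q : ℤ) (ha : a ≠ 0) (hb : b ≠ 0) (hpq : IsCoprime p q)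
    (hratio : a * q = b * p) (hp : Odd p) (hq : Odd q) :
    |∫ t in (0:ℝ)..1,
        Real.sign (Real.cos (2 * π * a * t) * Real.cos (2 * π * b * t))| =
      1 / |(p : ℝ) * q| :=
  stmt_13_general a b p q ha hpq hratio hp hq
end
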